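/- arXiv:2502.14334 — 3 statements merged into one kernel-verified Lean document; each statement's English description precedes it below -/
import Mathlib

section
/- For a random unit vector ψ uniformly distributed on the unit sphere in ℂ^d and Hermitian matrices A, B ∈ ℂ^{d×d}, the expectation of ⟨ψ|A|ψ⟩⟨ψ|B|ψ⟩ equals (Tr(A)Tr(B) + Tr(AB)) / (d(d+1)). -/
/-!
Write `T i j k l = 𝔼[ψ̄ᵢ ψⱼ ψ̄ₖ ψₗ]` for the fourth moments, so that the expectation equals
`∑ Aᵢⱼ Bₖₗ T i j k l`. Invariance under diagonal phase unitaries kills every `T i j k l` unless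
`(i = j ∧ k = l) ∨ (i = l ∧ j = k)`, and both surviving patterns reduce to `T i i k k`.
Permutation matrices make `a = T i i i i` independent of `i`; the unitary `(1 + I)/2 + (1 - I)/2 • P`,
with `P` the transposition of `i ≠ k`, turns `(|ψᵢ|² - |ψₖ|²)²` into `(2 Im (ψ̄ᵢ ψₖ))²`, whence
`T i i k k = a / 2`. Finally `∑ᵢₖ T i i k k = 𝔼[‖ψ‖⁴] = 1` fixes `a = 2 / (d (d + 1))`.
-/

open MeasureTheory Matrix ComplexConjugate

namespace Matrix

variable {ι : Type*} [Fintype ι] [DecidableEq ι]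

lemma diagonal_mem_unitaryGroup {u : ι → ℂ} (hu : ∀ n, conj (u n) * u n = 1) :
    diagonal u ∈ unitaryGroup ι ℂ := by
  rw [mem_unitaryGroup_iff', star_eq_conjTranspose, diagonal_conjTranspose,
    diagonal_mul_diagonal, ← diagonal_one]
  exact congrArg diagonal (funext hu)

lemma permMatrix_mem_unitaryGroup (σ : Equiv.Perm ι) : σ.permMatrix ℂ ∈ unitaryGroup ι ℂ := by
  rw [mem_unitaryGroup_iff, star_eq_conjTranspose, conjTranspose_permMatrix, ← permMatrix_mul,
    inv_mul_cancel, permMatrix_one]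

noncomputable def sqrtSwap (i k : ι) : Matrix ι ι ℂ :=
  ((1 + Complex.I) / 2) • (1 : Matrix ι ι ℂ) + ((1 - Complex.I) / 2) • (Equiv.swap i k).permMatrix ℂ

lemma sqrtSwap_mem_unitaryGroup (i k : ι) : sqrtSwap i k ∈ unitaryGroup ι ℂ := by
  have hP : (Equiv.swap i k).permMatrix ℂ * (Equiv.swap i k).permMatrix ℂ = 1 := by
    rw [← permMatrix_mul, Equiv.swap_mul_self, permMatrix_one]
  have hI := Complex.I_sq
  rw [mem_unitaryGroup_iff', star_eq_conjTranspose, sqrtSwap]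
  simp only [conjTranspose_add, conjTranspose_smul, conjTranspose_one, conjTranspose_permMatrix,
    Equiv.swap_inv, add_mul, mul_add, smul_mul_smul, one_mul, mul_one, hP, Complex.star_def,
    map_div₀, map_add, map_sub, map_one, Complex.conj_I, map_ofNat]
  rw [show (1 + -Complex.I) / 2 * ((1 + Complex.I) / 2) = 1 / 2 by linear_combination -hI / 4,
    show (1 - -Complex.I) / 2 * ((1 + Complex.I) / 2) = Complex.I / 2 by linear_combination hI / 4,
    show (1 + -Complex.I) / 2 * ((1 - Complex.I) / 2) = -Complex.I / 2 by linear_combination hI / 4,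
    show (1 - -Complex.I) / 2 * ((1 - Complex.I) / 2) = 1 / 2 by linear_combination -hI / 4]
  module

lemma sqrtSwap_mulVec (i k : ι) (ψ : ι → ℂ) :
    sqrtSwap i k *ᵥ ψ
      = ((1 + Complex.I) / 2) • ψ + ((1 - Complex.I) / 2) • (ψ ∘ Equiv.swap i k) := by
  simp [sqrtSwap, add_mulVec, smul_mulVec, permMatrix_mulVec]

end Matrix

def IsUnitarilyInvariant {ι : Type*} [Fintype ι] [DecidableEq ι] (μ : Measure (ι → ℂ)) : Prop :=
  ∀ U ∈ unitaryGroup ι ℂ, μ.map (fun ψ => U *ᵥ ψ) = μ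

section Moments

variable {ι : Type*} {μ : Measure (ι → ℂ)}

def quarticMonomial (i j k l : ι) (ψ : ι → ℂ) : ℂ :=
  conj (ψ i) * ψ j * (conj (ψ k) * ψ l)

@[fun_prop]
lemma continuous_quarticMonomial (i j k l : ι) : Continuous (quarticMonomial i j k l) := by
  unfold quarticMonomial
  fun_prop

noncomputable def fourthMoment (μ : Measure (ι → ℂ)) (i j k l : ι) : ℂ :=
  ∫ ψ, quarticMonomial i j k l ψ ∂μ

lemma fourthMoment_comm_pairs (i j k l : ι) : fourthMoment μ k l i j = fourthMoment μ i j k l := by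
  simp only [fourthMoment, quarticMonomial, mul_comm]

lemma fourthMoment_comm_kets (i j k l : ι) : fourthMoment μ i l k j = fourthMoment μ i j k l := by
  simp only [fourthMoment, quarticMonomial]
  congr 1 with ψ
  ring

lemma exists_phase_ne_one [DecidableEq ι] {i j k l : ι} (h1 : ¬(i = j ∧ k = l))
    (h2 : ¬(i = l ∧ j = k)) :
    ∃ u : ι → ℂ, (∀ n, conj (u n) * u n = 1) ∧ conj (u i) * u j * (conj (u k) * u l) ≠ 1 := by
  have hu : ∀ m n, conj (Function.update (1 : ι → ℂ) m Complex.I n) *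
      Function.update (1 : ι → ℂ) m Complex.I n = 1 := by
    intro m n
    by_cases h : n = m <;> simp [h]
  -- the phase `I` at an index that occurs unpaired
  refine ⟨Function.update 1 (if i = j then l else if i = l then j else i) Complex.I, hu _, ?_⟩
  by_cases hij : i = j
  · subst hij
    have hkl : k ≠ l := fun h => h1 ⟨rfl, h⟩
    by_cases hil : i = l <;> by_cases hik : i = k <;>
      simp_all [Complex.ext_iff, Function.update_apply]
  by_cases hil : i = l
  · subst hil
    have hjk : j ≠ k := fun h => h2 ⟨rfl, h⟩
    by_cases hik : i = k <;> simp_all [Complex.ext_iff, Function.update_apply, eq_comm]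
  by_cases hik : i = k <;> simp_all [Complex.ext_iff, Function.update_apply, eq_comm]
  norm_num

section Fintype

variable [Fintype ι]

lemma norm_le_one_of_sum_normSq_eq_one {ψ : ι → ℂ} (hψ : ∑ i, Complex.normSq (ψ i) = 1)
    (m : ι) : ‖ψ m‖ ≤ 1 := by
  have h : Complex.normSq (ψ m) ≤ 1 :=
    hψ ▸ Finset.single_le_sum (fun i _ => Complex.normSq_nonneg (ψ i)) (Finset.mem_univ m)
  rw [Complex.normSq_eq_norm_sq] at h
  nlinarith [norm_nonneg (ψ m)]

lemma integrable_quarticMonomial [IsFiniteMeasure μ]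
    (hsphere : ∀ᵐ ψ ∂μ, ∑ i, Complex.normSq (ψ i) = 1) (i j k l : ι) :
    Integrable (quarticMonomial i j k l) μ := by
  refine Integrable.mono' (integrable_const (1 : ℝ))
    (continuous_quarticMonomial i j k l).aestronglyMeasurable ?_
  filter_upwards [hsphere] with ψ hψ
  have h := norm_le_one_of_sum_normSq_eq_one hψ
  simp only [quarticMonomial, norm_mul, Complex.norm_conj]
  calc ‖ψ i‖ * ‖ψ j‖ * (‖ψ k‖ * ‖ψ l‖) ≤ 1 * 1 * (1 * 1) := by gcongr <;> exact h _
    _ = 1 := by norm_num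

lemma integral_sum_quarticMonomial [IsFiniteMeasure μ]
    (hsphere : ∀ᵐ ψ ∂μ, ∑ i, Complex.normSq (ψ i) = 1) (c : ι → ι → ι → ι → ℂ) :
    ∫ ψ, ∑ i, ∑ j, ∑ k, ∑ l, c i j k l * quarticMonomial i j k l ψ ∂μ
      = ∑ i, ∑ j, ∑ k, ∑ l, c i j k l * fourthMoment μ i j k l := by
  have h := fun i j k l => (integrable_quarticMonomial hsphere i j k l).const_mul (c i j k l)
  simp only [fourthMoment, ← integral_const_mul]
  rw [integral_finsetSum _ fun i _ => integrable_finsetSum _ fun j _ =>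
    integrable_finsetSum _ fun k _ => integrable_finsetSum _ fun l _ => h i j k l]
  refine Finset.sum_congr rfl fun i _ => ?_
  rw [integral_finsetSum _ fun j _ => integrable_finsetSum _ fun k _ =>
    integrable_finsetSum _ fun l _ => h i j k l]
  refine Finset.sum_congr rfl fun j _ => ?_
  rw [integral_finsetSum _ fun k _ => integrable_finsetSum _ fun l _ => h i j k l]
  exact Finset.sum_congr rfl fun k _ => integral_finsetSum _ fun l _ => h i j k l

lemma quadForm_mul_quadForm (A B : Matrix ι ι ℂ) (ψ : ι → ℂ) :
    (star ψ ⬝ᵥ A *ᵥ ψ) * (star ψ ⬝ᵥ B *ᵥ ψ)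
      = ∑ i, ∑ j, ∑ k, ∑ l, A i j * B k l * quarticMonomial i j k l ψ := by
  have h (M : Matrix ι ι ℂ) : star ψ ⬝ᵥ M *ᵥ ψ = ∑ i, ∑ j, M i j * (conj (ψ i) * ψ j) := by
    simp only [dotProduct, mulVec, Finset.mul_sum, Pi.star_apply, Complex.star_def]
    exact Finset.sum_congr rfl fun i _ => Finset.sum_congr rfl fun j _ => by ring
  simp only [h, Finset.sum_mul_sum]
  refine Finset.sum_congr rfl fun i _ => ?_
  rw [Finset.sum_comm]
  exact Finset.sum_congr rfl fun j _ => Finset.sum_congr rfl fun k _ =>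
    Finset.sum_congr rfl fun l _ => by rw [quarticMonomial]; ring

lemma integral_quadForm_mul_quadForm_eq_sum [IsFiniteMeasure μ]
    (hsphere : ∀ᵐ ψ ∂μ, ∑ i, Complex.normSq (ψ i) = 1) (A B : Matrix ι ι ℂ) :
    ∫ ψ, (star ψ ⬝ᵥ A *ᵥ ψ) * (star ψ ⬝ᵥ B *ᵥ ψ) ∂μ
      = ∑ i, ∑ j, ∑ k, ∑ l, A i j * B k l * fourthMoment μ i j k l := by
  simp only [quadForm_mul_quadForm]
  exact integral_sum_quarticMonomial hsphere _

variable [DecidableEq ι]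

lemma sum_fourthMoment_diag [IsProbabilityMeasure μ]
    (hsphere : ∀ᵐ ψ ∂μ, ∑ i, Complex.normSq (ψ i) = 1) :
    ∑ i, ∑ k, fourthMoment μ i i k k = 1 := by
  have hnorm : ∀ᵐ ψ ∂μ,
      (star ψ ⬝ᵥ (1 : Matrix ι ι ℂ) *ᵥ ψ) * (star ψ ⬝ᵥ (1 : Matrix ι ι ℂ) *ᵥ ψ) = 1 := by
    filter_upwards [hsphere] with ψ hψ
    have : star ψ ⬝ᵥ ψ = 1 := by
      simp only [dotProduct, Pi.star_apply, Complex.star_def, ← Complex.normSq_eq_conj_mul_self]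
      exact_mod_cast hψ
    simp [this]
  have h := integral_quadForm_mul_quadForm_eq_sum hsphere (1 : Matrix ι ι ℂ) 1
  rw [integral_congr_ae hnorm] at h
  simpa [one_apply] using h.symm

lemma integral_comp_mulVec (hinv : IsUnitarilyInvariant μ) {U : Matrix ι ι ℂ}
    (hU : U ∈ unitaryGroup ι ℂ) {f : (ι → ℂ) → ℂ} (hf : AEStronglyMeasurable f μ) :
    ∫ ψ, f (U *ᵥ ψ) ∂μ = ∫ ψ, f ψ ∂μ := by
  have hU_meas : Measurable (fun ψ : ι → ℂ => U *ᵥ ψ) :=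
    (Continuous.matrix_mulVec continuous_const continuous_id).measurable
  rw [← integral_map hU_meas.aemeasurable (by rwa [hinv U hU]), hinv U hU]

lemma fourthMoment_eq_integral_comp_mulVec (hinv : IsUnitarilyInvariant μ) {U : Matrix ι ι ℂ}
    (hU : U ∈ unitaryGroup ι ℂ) (i j k l : ι) :
    fourthMoment μ i j k l = ∫ ψ, quarticMonomial i j k l (U *ᵥ ψ) ∂μ :=
  (integral_comp_mulVec hinv hU (continuous_quarticMonomial i j k l).aestronglyMeasurable).symm

lemma fourthMoment_eq_zero (hinv : IsUnitarilyInvariant μ) {i j k l : ι}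
    (h1 : ¬(i = j ∧ k = l)) (h2 : ¬(i = l ∧ j = k)) :
    fourthMoment μ i j k l = 0 := by
  obtain ⟨u, hu, hne⟩ := exists_phase_ne_one h1 h2
  have h : fourthMoment μ i j k l
      = conj (u i) * u j * (conj (u k) * u l) * fourthMoment μ i j k l :=
    calc fourthMoment μ i j k l
        = ∫ ψ, quarticMonomial i j k l (diagonal u *ᵥ ψ) ∂μ :=
          fourthMoment_eq_integral_comp_mulVec hinv (diagonal_mem_unitaryGroup hu) i j k l
      _ = ∫ ψ, conj (u i) * u j * (conj (u k) * u l) * quarticMonomial i j k l ψ ∂μ := by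
          congr 1 with ψ
          simp only [quarticMonomial, mulVec_diagonal, map_mul]
          ring
      _ = _ := integral_const_mul _ _
  by_contra h0
  exact hne ((mul_eq_right₀ h0).1 h.symm)

lemma fourthMoment_perm (hinv : IsUnitarilyInvariant μ) (σ : Equiv.Perm ι) (i j k l : ι) :
    fourthMoment μ (σ i) (σ j) (σ k) (σ l) = fourthMoment μ i j k l := by
  rw [fourthMoment_eq_integral_comp_mulVec hinv (permMatrix_mem_unitaryGroup σ) i j k l]
  simp only [permMatrix_mulVec]
  rfl

lemma quarticMonomial_sqrtSwap_mulVec (i k : ι) (ψ : ι → ℂ) :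
    quarticMonomial i i i i (sqrtSwap i k *ᵥ ψ) - quarticMonomial i i k k (sqrtSwap i k *ᵥ ψ)
      - quarticMonomial k k i i (sqrtSwap i k *ᵥ ψ) + quarticMonomial k k k k (sqrtSwap i k *ᵥ ψ)
    = -quarticMonomial i k i k ψ + quarticMonomial i k k i ψ + quarticMonomial k i i k ψ
      - quarticMonomial k i k i ψ := by
  simp only [quarticMonomial, sqrtSwap_mulVec, Pi.add_apply, Pi.smul_apply, Function.comp_apply,
    Equiv.swap_apply_left, Equiv.swap_apply_right, smul_eq_mul, map_add, map_mul, map_div₀,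
    map_sub, map_one, map_ofNat, Complex.conj_I]
  linear_combination (conj (ψ i) * ψ k - conj (ψ k) * ψ i) ^ 2 * Complex.I_sq

lemma fourthMoment_diag_add_diag [IsFiniteMeasure μ] (hinv : IsUnitarilyInvariant μ)
    (hsphere : ∀ᵐ ψ ∂μ, ∑ i, Complex.normSq (ψ i) = 1) {i k : ι} (hik : i ≠ k) :
    fourthMoment μ i i i i + fourthMoment μ k k k k = 4 * fourthMoment μ i i k k := by
  have hint := integrable_quarticMonomial hsphere (μ := μ)
  have h := integral_comp_mulVec hinv (sqrtSwap_mem_unitaryGroup i k)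
    (f := fun ψ => quarticMonomial i i i i ψ - quarticMonomial i i k k ψ
      - quarticMonomial k k i i ψ + quarticMonomial k k k k ψ) (by fun_prop)
  simp only [quarticMonomial_sqrtSwap_mulVec] at h
  simp (disch := fun_prop) only [integral_add, integral_sub, integral_neg] at h
  simp only [← fourthMoment.eq_1] at h
  have hikik : fourthMoment μ i k i k = 0 := fourthMoment_eq_zero hinv (hik ·.1) (hik ·.1)
  have hkiki : fourthMoment μ k i k i = 0 := fourthMoment_eq_zero hinv (hik ·.1.symm) (hik ·.2)
  have hkkii : fourthMoment μ k k i i = fourthMoment μ i i k k := fourthMoment_comm_pairs i i k k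
  have hikki : fourthMoment μ i k k i = fourthMoment μ i i k k := fourthMoment_comm_kets i i k k
  have hkiik : fourthMoment μ k i i k = fourthMoment μ i i k k := by
    rw [fourthMoment_comm_pairs, hikki]
  rw [hikik, hkiki, hkkii, hikki, hkiik] at h
  linear_combination -h

lemma fourthMoment_diag [IsProbabilityMeasure μ] (hinv : IsUnitarilyInvariant μ)
    (hsphere : ∀ᵐ ψ ∂μ, ∑ i, Complex.normSq (ψ i) = 1) (i k : ι) :
    fourthMoment μ i i k k
      = (1 + if i = k then 1 else 0) / (Fintype.card ι * (Fintype.card ι + 1)) := by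
  obtain ⟨b, hval⟩ :
      ∃ b, ∀ m n : ι, fourthMoment μ m m n n = b * (1 + if m = n then 1 else 0) := by
    refine ⟨fourthMoment μ i i i i / 2, fun m n => ?_⟩
    have hdiag (m : ι) : fourthMoment μ m m m m = fourthMoment μ i i i i := by
      simpa using fourthMoment_perm hinv (Equiv.swap i m) i i i i
    rcases eq_or_ne m n with rfl | hmn
    · rw [hdiag, if_pos rfl]
      ring
    · have h := fourthMoment_diag_add_diag hinv hsphere hmn
      rw [hdiag m, hdiag n] at h
      rw [if_neg hmn]
      linear_combination -h / 4
  have hb : b * (Fintype.card ι * (Fintype.card ι + 1)) = 1 := by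
    have h := sum_fourthMoment_diag hsphere
    simp only [hval, ← Finset.mul_sum, Finset.sum_add_distrib, Finset.sum_const, Finset.card_univ,
      nsmul_eq_mul, mul_one, Finset.sum_ite_eq, Finset.mem_univ, if_true] at h
    linear_combination h
  rw [hval, div_eq_mul_inv, ← eq_inv_of_mul_eq_one_left hb, mul_comm]

lemma fourthMoment_eq [IsProbabilityMeasure μ] (hinv : IsUnitarilyInvariant μ)
    (hsphere : ∀ᵐ ψ ∂μ, ∑ i, Complex.normSq (ψ i) = 1) (i j k l : ι) :
    fourthMoment μ i j k l
      = ((if i = j then 1 else 0) * (if k = l then 1 else 0)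
          + (if i = l then 1 else 0) * (if j = k then 1 else 0))
        / (Fintype.card ι * (Fintype.card ι + 1)) := by
  by_cases h1 : i = j ∧ k = l
  · obtain ⟨rfl, rfl⟩ := h1
    rw [fourthMoment_diag hinv hsphere]
    by_cases hik : i = k <;> simp [hik]
  by_cases h2 : i = l ∧ j = k
  · obtain ⟨rfl, rfl⟩ := h2
    have hij : i ≠ j := fun h => h1 ⟨h, h.symm⟩
    rw [← fourthMoment_comm_kets, fourthMoment_diag hinv hsphere]
    simp [hij]
  rw [fourthMoment_eq_zero hinv h1 h2, ite_zero_mul_ite_zero, ite_zero_mul_ite_zero, if_neg h1,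
    if_neg h2]
  simp

theorem integral_quadForm_mul_quadForm [IsProbabilityMeasure μ] (hinv : IsUnitarilyInvariant μ)
    (hsphere : ∀ᵐ ψ ∂μ, ∑ i, Complex.normSq (ψ i) = 1) (A B : Matrix ι ι ℂ) :
    ∫ ψ, (star ψ ⬝ᵥ A *ᵥ ψ) * (star ψ ⬝ᵥ B *ᵥ ψ) ∂μ
      = (A.trace * B.trace + (A * B).trace) / (Fintype.card ι * (Fintype.card ι + 1)) := by
  rw [integral_quadForm_mul_quadForm_eq_sum hsphere]
  simp only [fourthMoment_eq hinv hsphere, ← mul_div_assoc, ← Finset.sum_div]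
  congr 1
  simp [mul_add, Finset.sum_add_distrib, trace, mul_apply, Finset.sum_mul_sum]

end Fintype

end Moments

theorem stmt1_general (d : ℕ)
    (μ : Measure (Fin d → ℂ)) [IsProbabilityMeasure μ]
    (hsphere : ∀ᵐ ψ ∂μ, ∑ i, Complex.normSq (ψ i) = 1)
    (hinv : ∀ U ∈ Matrix.unitaryGroup (Fin d) ℂ,
      μ.map (fun ψ => U.mulVec ψ) = μ)
    (A B : Matrix (Fin d) (Fin d) ℂ) :
    ∫ ψ, (star ψ ⬝ᵥ A.mulVec ψ) * (star ψ ⬝ᵥ B.mulVec ψ) ∂μ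
      = (A.trace * B.trace + (A * B).trace) / (d * (d + 1)) := by
  simpa using integral_quadForm_mul_quadForm hinv hsphere A B

/-- For ψ Haar-uniform on the unit sphere of ℂ^d and Hermitian A, B,
E[⟨ψ|A|ψ⟩⟨ψ|B|ψ⟩] = (Tr(A)Tr(B) + Tr(AB)) / (d(d+1)). -/
theorem stmt1 (d : ℕ) (hd : 0 < d)
    (μ : Measure (Fin d → ℂ)) [IsProbabilityMeasure μ]
    (hsphere : ∀ᵐ ψ ∂μ, ∑ i, Complex.normSq (ψ i) = 1)
    (hinv : ∀ U ∈ Matrix.unitaryGroup (Fin d) ℂ,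
      μ.map (fun ψ => U.mulVec ψ) = μ)
    (A B : Matrix (Fin d) (Fin d) ℂ) (hA : A.IsHermitian) (hB : B.IsHermitian) :
    ∫ ψ, (star ψ ⬝ᵥ A.mulVec ψ) * (star ψ ⬝ᵥ B.mulVec ψ) ∂μ
      = (A.trace * B.trace + (A * B).trace) / (d * (d + 1)) :=
  stmt1_general d μ hsphere hinv A B
end

section
/- With the same setup as the collision estimator, the variance of g̃ satisfies Var(g̃) ≤ (2/m²) E[g̃] + (4/m) Σ_{i=0}^{d−1} p_i³. -/
/-!
Write `N_a = #{j | x_j = a}`. Then `∑ N_a² = m + T`, where `T = ∑_{j ≠ k} 1{x_j = x_k}` counts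
the ordered collisions, so `g̃ = T / m²` and `Var g̃ = Var T / m⁴`. Expand `Var T` as a double sum
of covariances of collision indicators. Two pairs with disjoint supports are independent. A pair
meeting `(j, k)` in one index collides together with `(j, k)` exactly when all three indices agree,
which has probability `∑ p_a³`, and there are at most `4m` such pairs; the two pairs with support
`{j, k}` contribute at most `∑ p_a²` each. Hence `Var T ≤ m(m - 1)(2 ∑ p_a² + 4m ∑ p_a³)`, and
`E g̃ = (m - 1)/m · ∑ p_a²` turns this into the claim.
-/

open MeasureTheory ProbabilityTheory Finset

namespace Collision

variable {Ω ι α : Type*}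

def coincideOn (x : ι → Ω → α) (S : Finset ι) : Set Ω := {ω | ∃ a, ∀ j ∈ S, x j ω = a}

noncomputable def collision (x : ι → Ω → α) (q : ι × ι) : Ω → ℝ :=
  {ω | x q.1 ω = x q.2 ω}.indicator 1

lemma collision_apply [DecidableEq α] (x : ι → Ω → α) (q : ι × ι) (ω : Ω) :
    collision x q ω = if x q.1 ω = x q.2 ω then 1 else 0 := by
  simp [collision, Set.indicator_apply]

lemma coincideOn_eq_iUnion (x : ι → Ω → α) (S : Finset ι) :
    coincideOn x S = ⋃ a, ⋂ j ∈ S, x j ⁻¹' {a} := by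
  ext ω; simp [coincideOn]

section Pairs

variable [DecidableEq ι]

lemma setOf_eq_eq_coincideOn (x : ι → Ω → α) (j k : ι) :
    {ω | x j ω = x k ω} = coincideOn x {j, k} := by
  ext ω
  simp only [coincideOn, Set.mem_ofPred_eq, mem_insert, mem_singleton, forall_eq_or_imp,
    forall_eq]
  exact ⟨fun h => ⟨_, rfl, h.symm⟩, fun ⟨a, hj, hk⟩ => hj.trans hk.symm⟩

lemma coincideOn_inter_coincideOn (x : ι → Ω → α) {S T : Finset ι} (hST : ¬Disjoint S T) :
    coincideOn x S ∩ coincideOn x T = coincideOn x (S ∪ T) := by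
  obtain ⟨c, hcS, hcT⟩ := not_disjoint_iff.1 hST
  ext ω
  simp only [coincideOn, Set.mem_inter_iff, Set.mem_ofPred_eq, mem_union]
  constructor
  · rintro ⟨⟨a, ha⟩, ⟨b, hb⟩⟩
    have hab : a = b := (ha c hcS).symm.trans (hb c hcT)
    exact ⟨a, fun j hj => hj.elim (ha j) (fun hj => hab ▸ hb j hj)⟩
  · rintro ⟨a, ha⟩
    exact ⟨⟨a, fun j hj => ha j (Or.inl hj)⟩, ⟨a, fun j hj => ha j (Or.inr hj)⟩⟩

lemma collision_eq_indicator_coincideOn (x : ι → Ω → α) (q : ι × ι) :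
    collision x q = (coincideOn x {q.1, q.2}).indicator 1 := by
  rw [collision, setOf_eq_eq_coincideOn]

lemma collision_mul_collision (x : ι → Ω → α) {q q' : ι × ι}
    (h : ¬Disjoint ({q.1, q.2} : Finset ι) {q'.1, q'.2}) :
    collision x q * collision x q' = (coincideOn x ({q.1, q.2} ∪ {q'.1, q'.2})).indicator 1 := by
  rw [collision_eq_indicator_coincideOn, collision_eq_indicator_coincideOn,
    ← Set.inter_indicator_one, coincideOn_inter_coincideOn x h]

lemma sum_sq_sum_ite_eq [Fintype ι] [Fintype α] [DecidableEq α] (f : ι → α) :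
    ∑ a, (∑ j, if f j = a then (1 : ℝ) else 0) ^ 2 =
      Fintype.card ι + ∑ q ∈ univ.offDiag, if f q.1 = f q.2 then 1 else 0 := by
  have hsq (a : α) : (∑ j, if f j = a then (1 : ℝ) else 0) ^ 2 =
      ∑ q : ι × ι, (if f q.1 = a then 1 else 0) * (if f q.2 = a then 1 else 0) := by
    rw [sq, sum_mul_sum, ← Fintype.sum_prod_type']
  have hdiag : ∑ q ∈ (univ : Finset ι).diag, (if f q.1 = f q.2 then (1 : ℝ) else 0) =
      Fintype.card ι := by
    rw [sum_congr rfl fun q hq => if_pos (congrArg f (mem_diag.1 hq).2), sum_const, diag_card,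
      card_univ, nsmul_one]
  simp_rw [hsq]
  rw [sum_comm, ← hdiag, ← sum_union (disjoint_diag_offDiag _), diag_union_offDiag,
    univ_product_univ]
  refine sum_congr rfl fun q _ => ?_
  simp

end Pairs

variable [MeasurableSpace Ω] {μ : Measure Ω} [MeasurableSpace α] {x : ι → Ω → α} {p : α → ℝ}

structure IsIIDSample (x : ι → Ω → α) (p : α → ℝ) (μ : Measure Ω) : Prop where
  measurable : ∀ j, Measurable (x j)
  iIndepFun : iIndepFun x μ
  measureReal_eq : ∀ j a, μ.real {ω | x j ω = a} = p a

namespace IsIIDSample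

lemma nonneg (h : IsIIDSample x p μ) (j : ι) (a : α) : 0 ≤ p a :=
  h.measureReal_eq j a ▸ measureReal_nonneg

lemma le_one [IsProbabilityMeasure μ] (h : IsIIDSample x p μ) (j : ι) (a : α) : p a ≤ 1 :=
  h.measureReal_eq j a ▸ measureReal_le_one

variable [MeasurableSingletonClass α]

lemma measurableSet_coincideOn [Countable α] (h : IsIIDSample x p μ) (S : Finset ι) :
    MeasurableSet (coincideOn x S) := by
  rw [coincideOn_eq_iUnion]
  exact .iUnion fun a => .biInter S.countable_toSet fun j _ =>
    h.measurable j (measurableSet_singleton a)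

lemma measureReal_coincideOn [Fintype α] [IsProbabilityMeasure μ] (h : IsIIDSample x p μ)
    {S : Finset ι} (hS : S.Nonempty) : μ.real (coincideOn x S) = ∑ a, p a ^ #S := by
  obtain ⟨c, hc⟩ := hS
  rw [coincideOn_eq_iUnion, measureReal_iUnion_fintype]
  · refine sum_congr rfl fun a _ => ?_
    rw [measureReal_def,
      h.iIndepFun.measure_inter_preimage_eq_mul S fun _ _ => measurableSet_singleton a,
      ENNReal.toReal_prod]
    exact (prod_congr rfl fun j _ => h.measureReal_eq j a).trans (prod_const _)
  · intro a b hab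
    refine Set.disjoint_left.2 fun ω ha hb => hab ?_
    simp only [Set.mem_iInter, Set.mem_preimage, Set.mem_singleton_iff] at ha hb
    exact (ha c hc).symm.trans (hb c hc)
  · exact fun a => .biInter S.countable_toSet fun j _ => h.measurable j (measurableSet_singleton a)

variable [DecidableEq ι]

lemma memLp_collision [Countable α] [IsFiniteMeasure μ] (h : IsIIDSample x p μ) (q : ι × ι) :
    MemLp (collision x q) 2 μ := by
  rw [collision_eq_indicator_coincideOn]
  exact memLp_indicator_const 2 (h.measurableSet_coincideOn _) 1 (.inr (measure_ne_top μ _))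

lemma indepFun_collision [Countable α] (h : IsIIDSample x p μ) {q q' : ι × ι}
    (hqq' : Disjoint ({q.1, q.2} : Finset ι) {q'.1, q'.2}) :
    IndepFun (collision x q) (collision x q') μ := by
  have hdiag : Measurable ((Set.diagonal α).indicator (1 : α × α → ℝ)) :=
    measurable_one.indicator measurableSet_diagonal
  simp only [disjoint_insert_right, disjoint_singleton_right, mem_insert, mem_singleton,
    not_or] at hqq'
  obtain ⟨⟨h11, h12⟩, h21, h22⟩ := hqq'
  exact (h.iIndepFun.indepFun_prodMk_prodMk h.measurable q.1 q.2 q'.1 q'.2 (Ne.symm h11)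
    (Ne.symm h21) (Ne.symm h12) (Ne.symm h22)).comp hdiag hdiag

variable [Fintype α] [IsProbabilityMeasure μ]

lemma integral_collision (h : IsIIDSample x p μ) {q : ι × ι} (hq : q.1 ≠ q.2) :
    μ[collision x q] = ∑ a, p a ^ 2 := by
  rw [collision_eq_indicator_coincideOn, integral_indicator_one (h.measurableSet_coincideOn _),
    h.measureReal_coincideOn (insert_nonempty _ _), card_pair hq]

lemma integral_collision_mul_collision (h : IsIIDSample x p μ) {q q' : ι × ι}
    (hqq' : ¬Disjoint ({q.1, q.2} : Finset ι) {q'.1, q'.2}) :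
    μ[collision x q * collision x q'] = ∑ a, p a ^ #({q.1, q.2} ∪ {q'.1, q'.2}) := by
  rw [collision_mul_collision x hqq', integral_indicator_one (h.measurableSet_coincideOn _),
    h.measureReal_coincideOn ((insert_nonempty _ _).mono subset_union_left)]

lemma covariance_collision_le (h : IsIIDSample x p μ) {q q' : ι × ι} (hq : q.1 ≠ q.2)
    (hq' : q'.1 ≠ q'.2) :
    cov[collision x q, collision x q'; μ] ≤
      (if ({q'.1, q'.2} : Finset ι) = {q.1, q.2} then ∑ a, p a ^ 2 else 0) +
        (if ¬Disjoint ({q.1, q.2} : Finset ι) {q'.1, q'.2} then ∑ a, p a ^ 3 else 0) := by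
  have hα : 0 ≤ ∑ a, p a ^ 2 := sum_nonneg fun a _ => pow_nonneg (h.nonneg q.1 a) 2
  have hβ : 0 ≤ ∑ a, p a ^ 3 := sum_nonneg fun a _ => pow_nonneg (h.nonneg q.1 a) 3
  by_cases hdisj : Disjoint ({q.1, q.2} : Finset ι) {q'.1, q'.2}
  · rw [(h.indepFun_collision hdisj).covariance_eq_zero (h.memLp_collision q)
      (h.memLp_collision q'), if_neg (not_not_intro hdisj), add_zero]
    split_ifs <;> positivity
  have hcov : cov[collision x q, collision x q'; μ] ≤ μ[collision x q * collision x q'] := by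
    rw [covariance_eq_sub (h.memLp_collision q) (h.memLp_collision q'), h.integral_collision hq,
      h.integral_collision hq']
    exact sub_le_self _ (mul_nonneg hα hα)
  rw [h.integral_collision_mul_collision hdisj] at hcov
  rw [if_pos hdisj]
  split_ifs with hsame
  · rw [hsame, union_self, card_pair hq] at hcov
    linarith
  · rw [zero_add]
    -- the union strictly contains `{q.1, q.2}`, so `p a ^ #(union) ≤ p a ^ 3`
    have hcard : 3 ≤ #(({q.1, q.2} : Finset ι) ∪ {q'.1, q'.2}) := by
      refine (card_pair hq).symm.trans_lt (card_lt_card ⟨subset_union_left, fun hsub => hsame ?_⟩)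
      exact eq_of_subset_of_card_le (subset_union_right.trans hsub)
        (by rw [card_pair hq, card_pair hq'])
    calc cov[collision x q, collision x q'; μ] ≤ _ := hcov
      _ ≤ ∑ a, p a ^ 3 := sum_le_sum fun a _ =>
          pow_le_pow_of_le_one (h.nonneg q.1 a) (h.le_one q.1 a) hcard

lemma sum_covariance_collision_le [Fintype ι] (h : IsIIDSample x p μ) {q : ι × ι}
    (hq : q.1 ≠ q.2) :
    ∑ q' ∈ univ.offDiag, cov[collision x q, collision x q'; μ] ≤
      2 * ∑ a, p a ^ 2 + 4 * Fintype.card ι * ∑ a, p a ^ 3 := by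
  have hβ : 0 ≤ ∑ a, p a ^ 3 := sum_nonneg fun a _ => pow_nonneg (h.nonneg q.1 a) 3
  have hsame : #{q' ∈ univ.offDiag | ({q'.1, q'.2} : Finset ι) = {q.1, q.2}} ≤ 2 := by
    calc _ ≤ #(({q.1, q.2} : Finset ι).offDiag) := card_le_card fun q' hq' => by
          simp only [mem_filter, mem_offDiag] at hq' ⊢
          rw [← hq'.2]
          simp [hq'.1.2.2]
      _ = 2 := by rw [offDiag_card, card_pair hq]
  have hmeet : #{q' ∈ univ.offDiag | ¬Disjoint ({q.1, q.2} : Finset ι) {q'.1, q'.2}} ≤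
      4 * Fintype.card ι := by
    calc _ ≤ #(({q.1, q.2} : Finset ι) ×ˢ univ ∪ univ ×ˢ {q.1, q.2}) :=
          card_le_card fun q' hq' => by
          obtain ⟨c, hc, hc'⟩ := not_disjoint_iff.1 (mem_filter.1 hq').2
          simp only [mem_insert, mem_singleton] at hc'
          rcases hc' with rfl | rfl <;> simp [hc]
      _ ≤ 2 * Fintype.card ι + Fintype.card ι * 2 := by
          grw [card_union_le, card_product, card_product, card_pair hq, card_univ]
      _ = 4 * Fintype.card ι := by ring
  calc ∑ q' ∈ univ.offDiag, cov[collision x q, collision x q'; μ]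
      ≤ ∑ q' ∈ univ.offDiag,
          ((if ({q'.1, q'.2} : Finset ι) = {q.1, q.2} then ∑ a, p a ^ 2 else 0) +
            (if ¬Disjoint ({q.1, q.2} : Finset ι) {q'.1, q'.2} then ∑ a, p a ^ 3 else 0)) :=
        sum_le_sum fun q' hq' => h.covariance_collision_le hq (mem_offDiag.1 hq').2.2
    _ = #{q' ∈ univ.offDiag | ({q'.1, q'.2} : Finset ι) = {q.1, q.2}} * ∑ a, p a ^ 2 +
          #{q' ∈ univ.offDiag | ¬Disjoint ({q.1, q.2} : Finset ι) {q'.1, q'.2}} *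
            ∑ a, p a ^ 3 := by
        simp_rw [sum_add_distrib, ← sum_filter, sum_const, nsmul_eq_mul]
    _ ≤ 2 * ∑ a, p a ^ 2 + 4 * Fintype.card ι * ∑ a, p a ^ 3 := by
        gcongr
        · exact_mod_cast hsame
        · exact_mod_cast hmeet

lemma variance_sum_collision_le [Fintype ι] (h : IsIIDSample x p μ) :
    Var[∑ q ∈ univ.offDiag, collision x q; μ] ≤
      #(univ.offDiag : Finset (ι × ι)) *
        (2 * ∑ a, p a ^ 2 + 4 * Fintype.card ι * ∑ a, p a ^ 3) := by
  rw [variance_sum' fun q _ => h.memLp_collision q, ← nsmul_eq_mul, ← sum_const]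
  exact sum_le_sum fun q hq => h.sum_covariance_collision_le (mem_offDiag.1 hq).2.2

lemma integral_sum_collision [Fintype ι] (h : IsIIDSample x p μ) :
    μ[∑ q ∈ univ.offDiag, collision x q] =
      #(univ.offDiag : Finset (ι × ι)) * ∑ a, p a ^ 2 := by
  rw [← nsmul_eq_mul, ← sum_const]
  simp_rw [Finset.sum_apply]
  rw [integral_finsetSum _ fun q _ => (h.memLp_collision q).integrable one_le_two]
  exact sum_congr rfl fun q hq => h.integral_collision (mem_offDiag.1 hq).2.2

end IsIIDSample

end Collision

open Collision

theorem stmt6_general {Ω : Type*} [MeasurableSpace Ω] (μ : Measure Ω) [IsProbabilityMeasure μ]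
    (d m : ℕ)
    (p : Fin d → ℝ) (hp : ∀ i, 0 ≤ p i)
    (x : Fin m → Ω → Fin d) (hmeas : ∀ j, Measurable (x j))
    (hindep : iIndepFun x μ)
    (hdist : ∀ j i, μ {ω | x j ω = i} = ENNReal.ofReal (p i))
    (g : Ω → ℝ)
    (hg : g = fun ω => (1 : ℝ) / m ^ 2 *
        ∑ i : Fin d, (∑ j : Fin m, if x j ω = i then (1 : ℝ) else 0) ^ 2 - 1 / m) :
    variance g μ ≤ 2 / m ^ 2 * ∫ ω, g ω ∂μ + 4 / m * ∑ i, p i ^ 3 := by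
  obtain rfl | hm := Nat.eq_zero_or_pos m
  · simp [hg, ← Pi.zero_def, variance_zero]
  have h : IsIIDSample x p μ :=
    ⟨hmeas, hindep, fun j i => by rw [measureReal_def, hdist, ENNReal.toReal_ofReal (hp i)]⟩
  have hgT : g = ((m : ℝ) ^ 2)⁻¹ • ∑ q ∈ univ.offDiag, collision x q := by
    ext ω
    have hm0 : (m : ℝ) ≠ 0 := by positivity
    simp only [hg, sum_sq_sum_ite_eq, Fintype.card_fin, Pi.smul_apply, Finset.sum_apply,
      collision_apply, smul_eq_mul]
    field_simp
    ring
  have hN : (#(univ.offDiag : Finset (Fin m × Fin m)) : ℝ) ≤ m ^ 2 := by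
    exact_mod_cast (card_le_univ _).trans_eq (by simp [sq])
  set N : ℝ := (#(univ.offDiag : Finset (Fin m × Fin m)) : ℝ)
  set β := ∑ i, p i ^ 3
  have hβ : 0 ≤ β := sum_nonneg fun i _ => pow_nonneg (hp i) 3
  have hβterm : ((m : ℝ) ^ 2)⁻¹ ^ 2 * (N * (4 * m * β)) ≤ 4 / m * β := by
    calc ((m : ℝ) ^ 2)⁻¹ ^ 2 * (N * (4 * m * β))
        ≤ ((m : ℝ) ^ 2)⁻¹ ^ 2 * (m ^ 2 * (4 * m * β)) := by gcongr
      _ = 4 / m * β := by field_simp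
  rw [hgT, variance_smul]
  simp only [Pi.smul_apply, smul_eq_mul]
  rw [integral_const_mul, h.integral_sum_collision]
  calc ((m : ℝ) ^ 2)⁻¹ ^ 2 * Var[∑ q ∈ univ.offDiag, collision x q; μ]
      ≤ ((m : ℝ) ^ 2)⁻¹ ^ 2 * (N * (2 * ∑ i, p i ^ 2 + 4 * m * β)) := by
        grw [h.variance_sum_collision_le, Fintype.card_fin]
    _ = 2 / m ^ 2 * (((m : ℝ) ^ 2)⁻¹ * (N * ∑ i, p i ^ 2)) +
          ((m : ℝ) ^ 2)⁻¹ ^ 2 * (N * (4 * m * β)) := by ring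
    _ ≤ 2 / m ^ 2 * (((m : ℝ) ^ 2)⁻¹ * (N * ∑ i, p i ^ 2)) + 4 / m * β := by grw [hβterm]

/-- With the collision-estimator setup, the variance satisfies
Var(g̃) ≤ (2/m²) E[g̃] + (4/m) Σ_i p_i³. -/
theorem stmt6 {Ω : Type*} [MeasurableSpace Ω] (μ : Measure Ω) [IsProbabilityMeasure μ]
    (d m : ℕ) (hd : 0 < d) (hm : 1 ≤ m)
    (p : Fin d → ℝ) (hp : ∀ i, 0 ≤ p i) (hpsum : ∑ i, p i = 1)
    (x : Fin m → Ω → Fin d) (hmeas : ∀ j, Measurable (x j))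
    (hindep : iIndepFun x μ)
    (hdist : ∀ j i, μ {ω | x j ω = i} = ENNReal.ofReal (p i))
    (g : Ω → ℝ)
    (hg : g = fun ω => (1 : ℝ) / m ^ 2 *
        ∑ i : Fin d, (∑ j : Fin m, if x j ω = i then (1 : ℝ) else 0) ^ 2 - 1 / m) :
    variance g μ ≤ 2 / m ^ 2 * ∫ ω, g ω ∂μ + 4 / m * ∑ i, p i ^ 3 :=
  stmt6_general μ d m p hp x hmeas hindep hdist g hg
end

section
/- Let ρ be a d-dimensional density matrix, U a Haar-random d×d unitary, and measure m i.i.d. samples in the rotated basis {U†|i⟩⟨i|U}, so each outcome x_j has probability p_i(U) = ⟨i|UρU†|i⟩. The collision estimator g̃ = (1/m²) Σ_i (Σ_j 1{x_j = i})² − 1/m satisfies E[g̃] = (m−1)(1 + Tr(ρ²)) / (m(d+1)), where the expectation is over both the measurement outcomes and the Haar-random U. -/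
/-!
Conditionally on `U`, the outcomes are i.i.d. with law `p i = (U ρ U†) i i`; two distinct samples
collide with probability `∑ i, p i ^ 2`, so the collision estimator has conditional mean
`(m - 1) / m * ∑ i, p i ^ 2`, and it remains to average `∑ i, p i ^ 2` over `U`.

By left invariance, `E_U ⟨v| U ρ U† |v⟩²` depends only on `‖v‖`, since every vector is the image
under a unitary of a multiple of a basis vector; call its value on unit vectors `c`. For
`B = U ρ U†` and `a ≠ b`, the squares of `⟨v| B |v⟩` at the four vectors `v = e_a + iᵏ e_b`, all of
norm `√2`, add up to `4 B_aa² + 4 B_bb² + 8 (Re B_aa Re B_bb + |B_ab|²)`; taking means, the last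
bracket has mean `c`, and for `a = b` it is `2 B_aa²`, of mean `2c`. Summed over `a, b` the
bracket is `(Tr B)² + Tr B² = 1 + Tr ρ²` for every `U`, so `d (d + 1) c = 1 + Tr ρ²`, while the
mean of `∑ i, p i ^ 2` is `d c`.
-/

open MeasureTheory Matrix ComplexOrder

noncomputable instance matrixMeasurableSpace (d : ℕ) : MeasurableSpace (Matrix (Fin d) (Fin d) ℂ) :=
  inferInstanceAs (MeasurableSpace (Fin d → Fin d → ℂ))

instance matrixBorelSpace (d : ℕ) : BorelSpace (Matrix (Fin d) (Fin d) ℂ) :=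
  inferInstanceAs (BorelSpace (Fin d → Fin d → ℂ))

section Sampling

variable {ι α : Type*} [Fintype ι] [DecidableEq ι] [Fintype α] {p : α → ℝ}

theorem sum_prod_eq_one (hp : ∑ x, p x = 1) : ∑ xs : ι → α, ∏ l, p (xs l) = 1 := by
  rw [← Fintype.prod_sum, hp, Finset.prod_const_one]

variable [DecidableEq α]

theorem sum_prod_mul_prod_indicator (hp : ∑ x, p x = 1) (s : Finset ι) (a : α) :
    ∑ xs : ι → α, (∏ l, p (xs l)) * ∏ l ∈ s, (if xs l = a then (1 : ℝ) else 0) =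
      p a ^ s.card := by
  calc _ = ∑ xs : ι → α, ∏ l, p (xs l) * (if l ∈ s then (if xs l = a then 1 else 0) else 1) := by
        simp_rw [Finset.prod_mul_distrib, Fintype.prod_ite_mem]
    _ = ∏ l, ∑ x, p x * (if l ∈ s then (if x = a then 1 else 0) else 1) := by
        rw [Fintype.prod_sum]
    _ = ∏ l, if l ∈ s then p a else 1 := by
        refine Finset.prod_congr rfl fun l _ => ?_
        split_ifs <;> simp [hp]
    _ = p a ^ s.card := by rw [Fintype.prod_ite_mem, Finset.prod_const]

theorem sum_prod_mul_count_sq (hp : ∑ x, p x = 1) (a : α) :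
    ∑ xs : ι → α, (∏ l, p (xs l)) * (∑ j, if xs j = a then (1 : ℝ) else 0) ^ 2 =
      Fintype.card ι * p a + ((Fintype.card ι : ℝ) ^ 2 - Fintype.card ι) * p a ^ 2 := by
  have hsq : ∀ xs : ι → α, (∑ j, if xs j = a then (1 : ℝ) else 0) ^ 2 =
      ∑ j, ∑ k, ∏ l ∈ {j, k}, if xs l = a then (1 : ℝ) else 0 := by
    intro xs
    rw [sq, Finset.sum_mul_sum]
    refine Finset.sum_congr rfl fun j _ => Finset.sum_congr rfl fun k _ => ?_
    by_cases hjk : j = k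
    · subst hjk; simp
    · rw [Finset.prod_pair hjk]
  have hcard : ∀ j k : ι, p a ^ ({j, k} : Finset ι).card =
      p a ^ 2 + if j = k then p a - p a ^ 2 else 0 := by
    intro j k
    by_cases hjk : j = k
    · subst hjk; simp
    · simp [Finset.card_pair hjk, hjk]
  simp_rw [hsq, Finset.mul_sum]
  rw [Finset.sum_comm]
  simp_rw [Finset.sum_comm (γ := ι → α), sum_prod_mul_prod_indicator hp]
  simp only [hcard, Finset.sum_add_distrib, Finset.sum_ite_eq, Finset.mem_univ, if_true,
    Finset.sum_const, Finset.card_univ, nsmul_eq_mul]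
  ring

noncomputable def collisionEstimator (xs : ι → α) : ℝ :=
  1 / (Fintype.card ι : ℝ) ^ 2 * ∑ i, (∑ j, if xs j = i then (1 : ℝ) else 0) ^ 2 -
    1 / (Fintype.card ι : ℝ)

theorem sum_prod_mul_collisionEstimator (hp : ∑ x, p x = 1) :
    ∑ xs : ι → α, (∏ l, p (xs l)) * collisionEstimator xs =
      ((Fintype.card ι : ℝ) - 1) / Fintype.card ι * ∑ a, p a ^ 2 := by
  have hcount :
      ∑ xs : ι → α, (∏ l, p (xs l)) * ∑ i, (∑ j, if xs j = i then (1 : ℝ) else 0) ^ 2 =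
        Fintype.card ι + ((Fintype.card ι : ℝ) ^ 2 - Fintype.card ι) * ∑ a, p a ^ 2 := by
    simp_rw [Finset.mul_sum]
    rw [Finset.sum_comm]
    simp_rw [sum_prod_mul_count_sq hp, Finset.sum_add_distrib, ← Finset.mul_sum, hp, mul_one]
  have hsplit : ∀ xs : ι → α, (∏ l, p (xs l)) * collisionEstimator xs =
      1 / (Fintype.card ι : ℝ) ^ 2 *
          ((∏ l, p (xs l)) * ∑ i, (∑ j, if xs j = i then (1 : ℝ) else 0) ^ 2) -
        1 / (Fintype.card ι : ℝ) * ∏ l, p (xs l) := fun xs => by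
    rw [collisionEstimator]; ring
  simp_rw [hsplit, Finset.sum_sub_distrib, ← Finset.mul_sum, hcount, sum_prod_eq_one hp]
  rcases eq_or_ne (Fintype.card ι : ℝ) 0 with hm | hm
  · simp [hm]
  · field_simp
    ring

end Sampling

namespace Matrix

section Hermitian

variable {n : Type*} {B : Matrix n n ℂ}

theorem IsHermitian.normSq_apply_self (hB : B.IsHermitian) (a : n) :
    Complex.normSq (B a a) = (B a a).re ^ 2 := by
  have him : (B a a).im = 0 := by
    simpa using (congrArg Complex.im (hB.coe_re_apply_self a)).symm
  rw [Complex.normSq_apply, him]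
  ring

variable [Fintype n]

theorem IsHermitian.sum_re_mul_re_add_normSq (hB : B.IsHermitian) :
    ∑ a, ∑ b, ((B a a).re * (B b b).re + Complex.normSq (B a b)) =
      B.trace.re ^ 2 + (B * B).trace.re := by
  have hsq : (B * B).trace.re = ∑ a, ∑ b, Complex.normSq (B a b) := by
    simp only [trace, diag, mul_apply, Complex.re_sum]
    refine Finset.sum_congr rfl fun a _ => Finset.sum_congr rfl fun b _ => ?_
    rw [← hB.apply a b, Complex.normSq_apply]
    simp
  simp only [Finset.sum_add_distrib]
  rw [hsq, ← Finset.sum_mul_sum, sq, trace, Complex.re_sum]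
  rfl

variable [DecidableEq n]

theorem star_single_dotProduct_mulVec_single (a : n) (s : ℂ) :
    star (Pi.single a s) ⬝ᵥ (B *ᵥ Pi.single a s) = star s * B a a * s := by
  simp [mulVec_single, Pi.star_single, single_dotProduct, mul_comm]

theorem IsHermitian.re_star_dotProduct_mulVec_single_add_single (hB : B.IsHermitian)
    (a b : n) {ω : ℂ} (hω : ‖ω‖ = 1) :
    (star (Pi.single a 1 + Pi.single b ω) ⬝ᵥ (B *ᵥ (Pi.single a 1 + Pi.single b ω))).re =
      (B a a).re + (B b b).re + 2 * (ω * B a b).re := by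
  have hba : B b a = star (B a b) := (hB.apply b a).symm
  have hω' : ω.re * ω.re + ω.im * ω.im = 1 := by
    rw [← Complex.normSq_apply, Complex.normSq_eq_norm_sq, hω, one_pow]
  simp only [star_add, Pi.star_single, star_one, RCLike.star_def, mulVec_add, mulVec_single,
    MulOpposite.op_one, one_smul, op_smul_eq_smul, dotProduct_add, add_dotProduct,
    single_dotProduct, col_apply, one_mul, hba, dotProduct_smul, smul_eq_mul, Complex.add_re,
    Complex.mul_re, Complex.conj_re, Complex.conj_im, mul_neg, neg_mul, neg_neg, sub_neg_eq_add,
    Complex.add_im, Complex.mul_im]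
  linear_combination (B b b).re * hω'

theorem IsHermitian.sum_sq_re_star_dotProduct_mulVec_single_add_single (hB : B.IsHermitian)
    (a b : n) :
    ∑ k : Fin 4, (star (Pi.single a 1 + Pi.single b (Complex.I ^ (k : ℕ))) ⬝ᵥ
        (B *ᵥ (Pi.single a 1 + Pi.single b (Complex.I ^ (k : ℕ))))).re ^ 2 =
      4 * ((B a a).re ^ 2 + (B b b).re ^ 2) +
        8 * ((B a a).re * (B b b).re + Complex.normSq (B a b)) := by
  simp only [hB.re_star_dotProduct_mulVec_single_add_single a b (by simp : ‖Complex.I ^ _‖ = 1)]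
  simp only [Complex.mul_re, pow_succ, pow_zero, one_mul, Fin.sum_univ_four, Fin.isValue,
    Fin.coe_ofNat_eq_mod, Nat.zero_mod, Complex.one_re, Complex.one_im, zero_mul, sub_zero,
    Nat.one_mod, Complex.I_re, Complex.I_im, zero_sub, mul_neg, Nat.reduceMod, Complex.I_mul_I,
    Complex.neg_re, neg_mul, Complex.neg_im, neg_zero, Nat.mod_succ, sub_neg_eq_add, zero_add,
    Complex.normSq_apply]
  ring

end Hermitian

section UnitaryGroup

variable {n : Type*} [Fintype n] [DecidableEq n]

theorem isCompact_unitaryGroup : IsCompact (unitaryGroup n ℂ : Set (Matrix n n ℂ)) := by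
  refine (isCompact_univ_pi fun i => isCompact_univ_pi fun j => isCompact_closedBall (0 : ℂ) 1)
    |>.of_isClosed_subset (isClosed_unitary (R := Matrix n n ℂ)) fun U hU i _ j _ => ?_
  simpa using entry_norm_bound_of_unitary hU i j

instance : CompactSpace (unitaryGroup n ℂ) :=
  isCompact_iff_compactSpace.mp isCompact_unitaryGroup

theorem exists_mem_unitaryGroup_mulVec_single (i₀ : n) (v : n → ℂ) :
    ∃ V ∈ unitaryGroup n ℂ, V *ᵥ Pi.single i₀ (‖WithLp.toLp 2 v‖ : ℂ) = v := by
  rcases eq_or_ne v 0 with rfl | hv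
  · exact ⟨1, one_mem _, by simp⟩
  have hr : (‖WithLp.toLp 2 v‖ : ℂ) ≠ 0 := by simpa using hv
  set u : EuclideanSpace ℂ n := (‖WithLp.toLp 2 v‖⁻¹ : ℂ) • WithLp.toLp 2 v
  have hu : Orthonormal ℂ (({i₀} : Set n).domRestrict fun _ => u) := by
    refine orthonormal_subsingleton_iff.mpr fun _ => ?_
    simp [u, Set.domRestrict_apply, norm_smul, hv]
  obtain ⟨b, hb⟩ := hu.exists_orthonormalBasis_extension_of_card_eq finrank_euclideanSpace
  refine ⟨(EuclideanSpace.basisFun n ℂ).toBasis.toMatrix b,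
    (EuclideanSpace.basisFun n ℂ).toMatrix_orthonormalBasis_mem_unitary b, funext fun i => ?_⟩
  simp only [mulVec_single, Pi.smul_apply, col_apply, Module.Basis.toMatrix_apply, hb i₀ rfl,
    map_smul, Finsupp.coe_smul, OrthonormalBasis.coe_toBasis_repr_apply,
    EuclideanSpace.basisFun_repr, smul_eq_mul, MulOpposite.smul_eq_mul_unop, MulOpposite.unop_op, u]
  field_simp

noncomputable def unitaryConj (ρ : Matrix n n ℂ) (U : unitaryGroup n ℂ) : Matrix n n ℂ :=
  (U : Matrix n n ℂ) * ρ * (U : Matrix n n ℂ)ᴴ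

variable {ρ : Matrix n n ℂ}

theorem IsHermitian.unitaryConj (hρ : ρ.IsHermitian) (U : unitaryGroup n ℂ) :
    (ρ.unitaryConj U).IsHermitian :=
  isHermitian_mul_mul_conjTranspose _ hρ

theorem trace_unitaryConj (U : unitaryGroup n ℂ) : (ρ.unitaryConj U).trace = ρ.trace := by
  rw [unitaryConj, trace_mul_comm, ← Matrix.mul_assoc, ← star_eq_conjTranspose,
    UnitaryGroup.star_mul_self, Matrix.one_mul]

theorem unitaryConj_mul_self (U : unitaryGroup n ℂ) :
    ρ.unitaryConj U * ρ.unitaryConj U = (ρ * ρ).unitaryConj U := by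
  simp only [unitaryConj, Matrix.mul_assoc]
  rw [← Matrix.mul_assoc _ (U : Matrix n n ℂ), ← star_eq_conjTranspose,
    UnitaryGroup.star_mul_self, Matrix.one_mul]

theorem star_mulVec_dotProduct_unitaryConj_mulVec (V U : unitaryGroup n ℂ) (v : n → ℂ) :
    star ((V : Matrix n n ℂ) *ᵥ v) ⬝ᵥ (ρ.unitaryConj U *ᵥ ((V : Matrix n n ℂ) *ᵥ v)) =
      star v ⬝ᵥ (ρ.unitaryConj (V⁻¹ * U) *ᵥ v) := by
  simp only [unitaryConj, star_mulVec, Matrix.mul_assoc, mulVec_mulVec, dotProduct_mulVec,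
    vecMul_vecMul, Submonoid.coe_mul, UnitaryGroup.inv_val, conjTranspose_mul,
    star_eq_conjTranspose, conjTranspose_conjTranspose]

@[fun_prop]
theorem continuous_unitaryConj : Continuous fun U : unitaryGroup n ℂ => ρ.unitaryConj U := by
  unfold unitaryConj
  fun_prop

end UnitaryGroup

end Matrix

theorem Continuous.integrable_of_compactSpace {X E : Type*} [TopologicalSpace X] [CompactSpace X]
    [MeasurableSpace X] [OpensMeasurableSpace X] [NormedAddCommGroup E] {μ : Measure X}
    [IsFiniteMeasure μ] {f : X → E} (hf : Continuous f) : Integrable f μ :=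
  hf.integrable_of_hasCompactSupport (HasCompactSupport.of_compactSpace f)

section UnitarilyInvariant

variable {d : ℕ}

noncomputable def secondMoment (ν : Measure (unitaryGroup (Fin d) ℂ))
    (ρ : Matrix (Fin d) (Fin d) ℂ) (v : Fin d → ℂ) : ℝ :=
  ∫ U, (star v ⬝ᵥ (ρ.unitaryConj U *ᵥ v)).re ^ 2 ∂ν

variable {ν : Measure (unitaryGroup (Fin d) ℂ)} (ρ : Matrix (Fin d) (Fin d) ℂ)

theorem secondMoment_single (a : Fin d) (s : ℂ) :
    secondMoment ν ρ (Pi.single a s) =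
      Complex.normSq s ^ 2 * ∫ U, (ρ.unitaryConj U a a).re ^ 2 ∂ν := by
  rw [secondMoment, ← integral_const_mul]
  refine integral_congr_ae (ae_of_all _ fun U => ?_)
  dsimp only
  rw [star_single_dotProduct_mulVec_single, mul_right_comm, RCLike.star_def,
    ← Complex.normSq_eq_conj_mul_self, Complex.re_ofReal_mul]
  ring

variable [ν.IsMulLeftInvariant]

theorem secondMoment_unitary_mulVec (V : unitaryGroup (Fin d) ℂ) (v : Fin d → ℂ) :
    secondMoment ν ρ ((V : Matrix (Fin d) (Fin d) ℂ) *ᵥ v) = secondMoment ν ρ v := by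
  simp only [secondMoment, star_mulVec_dotProduct_unitaryConj_mulVec]
  exact integral_mul_left_eq_self (fun U => (star v ⬝ᵥ (ρ.unitaryConj U *ᵥ v)).re ^ 2) V⁻¹

theorem secondMoment_eq_of_norm_eq {u v : Fin d → ℂ}
    (h : ‖WithLp.toLp 2 u‖ = ‖WithLp.toLp 2 v‖) : secondMoment ν ρ u = secondMoment ν ρ v := by
  rcases isEmpty_or_nonempty (Fin d) with hd | ⟨⟨i₀⟩⟩
  · rw [Subsingleton.elim u v]
  have hsingle : ∀ w : Fin d → ℂ,
      secondMoment ν ρ w = secondMoment ν ρ (Pi.single i₀ (‖WithLp.toLp 2 w‖ : ℂ)) := by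
    intro w
    obtain ⟨V, hV, hVw⟩ := exists_mem_unitaryGroup_mulVec_single i₀ w
    conv_lhs => rw [← hVw]
    exact secondMoment_unitary_mulVec ρ ⟨V, hV⟩ _
  rw [hsingle u, hsingle v, h]

theorem secondMoment_single_add_single {a b : Fin d} (hab : a ≠ b) {ω : ℂ} (hω : ‖ω‖ = 1) :
    secondMoment ν ρ (Pi.single a 1 + Pi.single b ω) =
      4 * ∫ U, (ρ.unitaryConj U a a).re ^ 2 ∂ν := by
  have hlhs : ∀ x, ‖(Pi.single a 1 + Pi.single b ω : Fin d → ℂ) x‖ ^ 2 =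
      (if x = a then 1 else 0) + (if x = b then 1 else 0) := fun x => by
    by_cases hxa : x = a <;> by_cases hxb : x = b <;> simp_all
  have hrhs : ∀ x, ‖(Pi.single a (Real.sqrt 2 : ℂ) : Fin d → ℂ) x‖ ^ 2 =
      if x = a then 2 else 0 :=
    fun x => by by_cases hxa : x = a <;> simp [hxa]
  rw [secondMoment_eq_of_norm_eq ρ (v := Pi.single a (Real.sqrt 2 : ℂ)),
    secondMoment_single]
  · norm_num [Complex.normSq_ofReal]
  · simp only [EuclideanSpace.norm_eq, hlhs, hrhs, Finset.sum_add_distrib, Finset.sum_ite_eq',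
      Finset.mem_univ, if_true]
    norm_num

variable [IsProbabilityMeasure ν]

theorem integral_re_mul_re_add_normSq_unitaryConj (hρ : ρ.IsHermitian) (a b : Fin d) :
    ∫ U, ((ρ.unitaryConj U a a).re * (ρ.unitaryConj U b b).re +
      Complex.normSq (ρ.unitaryConj U a b)) ∂ν =
      if a = b then 2 * ∫ U, (ρ.unitaryConj U a a).re ^ 2 ∂ν
      else ∫ U, (ρ.unitaryConj U a a).re ^ 2 ∂ν := by
  split_ifs with hab
  · subst hab
    rw [← integral_const_mul]
    refine integral_congr_ae (ae_of_all _ fun U => ?_)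
    dsimp only
    rw [(hρ.unitaryConj U).normSq_apply_self]
    ring
  have hdiag : ∫ U, (ρ.unitaryConj U b b).re ^ 2 ∂ν = ∫ U, (ρ.unitaryConj U a a).re ^ 2 ∂ν := by
    simpa [secondMoment_single] using secondMoment_eq_of_norm_eq ρ
      (u := Pi.single b 1) (v := Pi.single a 1) (by simp)
  have hpolar :
      ∑ k : Fin 4, secondMoment ν ρ (Pi.single a 1 + Pi.single b (Complex.I ^ (k : ℕ))) =
        ∫ U, (4 * ((ρ.unitaryConj U a a).re ^ 2 + (ρ.unitaryConj U b b).re ^ 2) +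
          8 * ((ρ.unitaryConj U a a).re * (ρ.unitaryConj U b b).re +
            Complex.normSq (ρ.unitaryConj U a b))) ∂ν := by
    simp only [secondMoment]
    rw [← integral_finsetSum _ fun k _ => Continuous.integrable_of_compactSpace (by fun_prop)]
    exact integral_congr_ae (ae_of_all _ fun U =>
      (hρ.unitaryConj U).sum_sq_re_star_dotProduct_mulVec_single_add_single a b)
  rw [Finset.sum_congr rfl fun k _ => secondMoment_single_add_single ρ hab (by simp),
    integral_add, integral_const_mul, integral_add, integral_const_mul, hdiag] at hpolar
  · simp only [Finset.sum_const, Finset.card_univ, Fintype.card_fin, nsmul_eq_mul,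
      Nat.cast_ofNat] at hpolar
    linarith
  all_goals exact Continuous.integrable_of_compactSpace (by fun_prop)

theorem integral_sum_sq_re_unitaryConj_apply_self (hρ : ρ.IsHermitian) :
    ∫ U, ∑ a, (ρ.unitaryConj U a a).re ^ 2 ∂ν =
      (ρ.trace.re ^ 2 + (ρ * ρ).trace.re) / (d + 1) := by
  have hsum : ∫ U, ∑ a, ∑ b, ((ρ.unitaryConj U a a).re * (ρ.unitaryConj U b b).re +
      Complex.normSq (ρ.unitaryConj U a b)) ∂ν =
        (d + 1) * ∫ U, ∑ a, (ρ.unitaryConj U a a).re ^ 2 ∂ν := by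
    rw [integral_finsetSum _ fun a _ => Continuous.integrable_of_compactSpace (by fun_prop),
      integral_finsetSum _ fun a _ => Continuous.integrable_of_compactSpace (by fun_prop),
      Finset.mul_sum]
    refine Finset.sum_congr rfl fun a _ => ?_
    rw [integral_finsetSum _ fun b _ => Continuous.integrable_of_compactSpace (by fun_prop)]
    simp_rw [integral_re_mul_re_add_normSq_unitaryConj ρ hρ a]
    set c := ∫ U, (ρ.unitaryConj U a a).re ^ 2 ∂ν
    have hsplit : ∀ b, (if a = b then 2 * c else c) = c + if a = b then c else 0 := fun b => by
      split_ifs <;> ring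
    simp only [hsplit, Finset.sum_add_distrib, Finset.sum_ite_eq, Finset.mem_univ, if_true,
      Finset.sum_const, Finset.card_univ, Fintype.card_fin, nsmul_eq_mul]
    ring
  have hpt : ∀ U : unitaryGroup (Fin d) ℂ,
      ∑ a, ∑ b, ((ρ.unitaryConj U a a).re * (ρ.unitaryConj U b b).re +
        Complex.normSq (ρ.unitaryConj U a b)) = ρ.trace.re ^ 2 + (ρ * ρ).trace.re := fun U => by
    rw [(hρ.unitaryConj U).sum_re_mul_re_add_normSq, trace_unitaryConj, unitaryConj_mul_self,
      trace_unitaryConj]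
  simp_rw [hpt, integral_const] at hsum
  rw [eq_div_iff (by positivity), mul_comm, ← hsum]
  simp

end UnitarilyInvariant

theorem stmt7_general (d m : ℕ)
    (ν : Measure (Matrix.unitaryGroup (Fin d) ℂ)) [IsProbabilityMeasure ν]
    (hinv : ∀ V : Matrix.unitaryGroup (Fin d) ℂ, ν.map (fun U => V * U) = ν)
    (ρ : Matrix (Fin d) (Fin d) ℂ) (hρ : ρ.PosSemidef) (htr : ρ.trace = 1) :
    ∫ U, (∑ xs : Fin m → Fin d,
        (∏ j, (((U : Matrix (Fin d) (Fin d) ℂ) * ρ *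
            (U : Matrix (Fin d) (Fin d) ℂ)ᴴ) (xs j) (xs j)).re) *
          ((1 : ℝ) / m ^ 2 *
            ∑ i : Fin d, (∑ j : Fin m, if xs j = i then (1 : ℝ) else 0) ^ 2 - 1 / m)) ∂ν
      = ((m : ℝ) - 1) * (1 + ((ρ * ρ).trace).re) / (m * (d + 1)) := by
  have : ν.IsMulLeftInvariant := ⟨hinv⟩
  have hp : ∀ U, ∑ i, (ρ.unitaryConj U i i).re = 1 := fun U => by
    simpa [trace, Complex.re_sum] using congrArg Complex.re ((trace_unitaryConj U).trans htr)
  calc _ = ∫ U, ((m : ℝ) - 1) / m * ∑ i, (ρ.unitaryConj U i i).re ^ 2 ∂ν :=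
        integral_congr_ae (ae_of_all _ fun U => by
          have h := sum_prod_mul_collisionEstimator (ι := Fin m) (hp U)
          simp only [collisionEstimator, Fintype.card_fin] at h
          exact h)
    _ = _ := by
        rw [integral_const_mul, integral_sum_sq_re_unitaryConj_apply_self ρ hρ.1, htr,
          Complex.one_re, one_pow, div_mul_div_comm]

/-- For a density matrix ρ and a Haar-random unitary U (formalized as a
left-invariant probability measure ν on the unitary group), measuring m i.i.d. samples
in the rotated basis, each outcome i having probability p_i(U) = (UρU†)_{ii}, the
collision estimator g̃ satisfies
E[g̃] = (m−1)(1 + Tr(ρ²)) / (m(d+1)), the expectation being over outcomes and U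
(the inner expectation over outcomes is the finite sum over outcome tuples xs). -/
theorem stmt7 (d m : ℕ) (hd : 0 < d) (hm : 1 ≤ m)
    (ν : Measure (Matrix.unitaryGroup (Fin d) ℂ)) [IsProbabilityMeasure ν]
    (hinv : ∀ V : Matrix.unitaryGroup (Fin d) ℂ, ν.map (fun U => V * U) = ν)
    (ρ : Matrix (Fin d) (Fin d) ℂ) (hρ : ρ.PosSemidef) (htr : ρ.trace = 1) :
    ∫ U, (∑ xs : Fin m → Fin d,
        (∏ j, (((U : Matrix (Fin d) (Fin d) ℂ) * ρ *
            (U : Matrix (Fin d) (Fin d) ℂ)ᴴ) (xs j) (xs j)).re) *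
          ((1 : ℝ) / m ^ 2 *
            ∑ i : Fin d, (∑ j : Fin m, if xs j = i then (1 : ℝ) else 0) ^ 2 - 1 / m)) ∂ν
      = ((m : ℝ) - 1) * (1 + ((ρ * ρ).trace).re) / (m * (d + 1)) :=
  stmt7_general d m ν hinv ρ hρ htr
end
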